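/- Let D_n be the n-th binary diamond graph with its graph metric. The Lipschitz free space F(D_n) contains a 1-complemented subspace linearly isometric to ℓ₁^k with k = 2·4^{n−1}. -/

import Mathlib

open Finset

/-- The Lipschitz-free (Kantorovich–Rubinstein) norm of a molecule on a finite
metric space, expressed via duality with `1`-Lipschitz functions. -/
noncomputable def freeNorm (M : Type*) [MetricSpace M] [Fintype M] (m : M → ℝ) : ℝ :=
  sSup {r : ℝ | ∃ f : M → ℝ, LipschitzWith 1 f ∧ r = ∑ p, m p * f p}

/-- Molecules: the underlying vector space of the Lipschitz free space on a finite space;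
equipped with `freeNorm` it is the Lipschitz free space `F(M)`. -/
def molecules (M : Type*) [Fintype M] : Submodule ℝ (M → ℝ) where
  carrier := {m | ∑ p, m p = 0}
  add_mem' := by
    intro a b ha hb
    simp only [Set.mem_setOf_eq, Pi.add_apply, Finset.sum_add_distrib] at *
    rw [ha, hb]; ring
  zero_mem' := by simp
  smul_mem' := by
    intro c a ha
    simp only [Set.mem_setOf_eq, Pi.smul_apply, smul_eq_mul, ← Finset.mul_sum] at *
    rw [ha]; ring

/-- The norm of `ℓ₁^k`. -/
def l1norm {k : ℕ} (x : Fin k → ℝ) : ℝ := ∑ i, |x i|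

/-- Edge set of the `n`-th binary diamond graph: each edge spawns 4 edges. -/
def DE : ℕ → Type
  | 0 => Unit
  | n + 1 => DE n × Fin 4

/-- Vertex set of the `n`-th binary diamond graph: two new vertices per old edge. -/
def DV : ℕ → Type
  | 0 => Fin 2
  | n + 1 => DV n ⊕ DE n × Fin 2

def deDecEq : ∀ n, DecidableEq (DE n)
  | 0 => inferInstanceAs (DecidableEq Unit)
  | n + 1 => letI := deDecEq n; inferInstanceAs (DecidableEq (DE n × Fin 4))

instance (n : ℕ) : DecidableEq (DE n) := deDecEq n

def deFintype : ∀ n, Fintype (DE n)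
  | 0 => inferInstanceAs (Fintype Unit)
  | n + 1 => letI := deFintype n; inferInstanceAs (Fintype (DE n × Fin 4))

instance (n : ℕ) : Fintype (DE n) := deFintype n

def dvDecEq : ∀ n, DecidableEq (DV n)
  | 0 => inferInstanceAs (DecidableEq (Fin 2))
  | n + 1 => letI := dvDecEq n; letI := deDecEq n
              inferInstanceAs (DecidableEq (DV n ⊕ DE n × Fin 2))

instance (n : ℕ) : DecidableEq (DV n) := dvDecEq n

def dvFintype : ∀ n, Fintype (DV n)
  | 0 => inferInstanceAs (Fintype (Fin 2))
  | n + 1 => letI := dvFintype n; letI := deFintype n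
              inferInstanceAs (Fintype (DV n ⊕ DE n × Fin 2))

instance (n : ℕ) : Fintype (DV n) := dvFintype n

/-- Endpoints of the edges of the diamond graph `D_n`; each edge `e = (u,v)`
(`u` the endpoint nearer the top) of `D_{n-1}` is replaced by the quadrilateral
`u, a, v, b` with edges `u a`, `a v`, `b v`, `u b`, each oriented downwards
(first coordinate nearer the top). `D_0` is a single edge `(0,1)` (`0` the top). -/
def ends : ∀ n, DE n → DV n × DV n
  | 0, _ => ((0 : Fin 2), (1 : Fin 2))
  | n + 1, (e, i) =>
      let u : DV (n + 1) := Sum.inl (ends n e).1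
      let v : DV (n + 1) := Sum.inl (ends n e).2
      let a : DV (n + 1) := Sum.inr (e, (0 : Fin 2))
      let b : DV (n + 1) := Sum.inr (e, (1 : Fin 2))
      if i.val = 0 then (u, a)
      else if i.val = 1 then (a, v)
      else if i.val = 2 then (b, v)
      else (u, b)

/-- The `n`-th binary diamond graph `D_n` (as an undirected simple graph). -/
def DG (n : ℕ) : SimpleGraph (DV n) where
  Adj x y := x ≠ y ∧ ∃ e : DE n, ends n e = (x, y) ∨ ends n e = (y, x)
  symm := by
    constructor
    intro x y h
    obtain ⟨hxy, e, he⟩ := h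
    exact ⟨hxy.symm, e, he.symm⟩
  loopless := by
    constructor
    intro x h
    exact h.1 rfl

/-- The cycle space `Z(D_n)` of the diamond graph: the space of circulations, i.e. the
kernel of the boundary operator. Over `ℝ` this is exactly the linear span of the signed
indicator functions of the cycles of `D_n` (w.r.t. the orientation given by `ends`). -/
def cycleSpace (n : ℕ) : Submodule ℝ (DE n → ℝ) where
  carrier := {f | ∀ v : DV n,
    ∑ e : DE n, f e * ((if (ends n e).2 = v then (1 : ℝ) else 0) -
      (if (ends n e).1 = v then (1 : ℝ) else 0)) = 0}
  add_mem' := by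
    intro a b ha hb
    intro v
    simp only [Pi.add_apply, add_mul]
    rw [Finset.sum_add_distrib, ha v, hb v]
    ring
  zero_mem' := by
    intro v
    simp
  smul_mem' := by
    intro c a ha
    intro v
    simp only [Pi.smul_apply, smul_eq_mul, mul_assoc]
    rw [← Finset.mul_sum, ha v, mul_zero]

/-- The `ℓ₁(E(D_n))` norm on the edge space. -/
def e1norm {n : ℕ} (f : DE n → ℝ) : ℝ := ∑ e, |f e|

/-!
For `n = m + 1`, the `2·4^m` vertices added at the last step are pairwise at distance `2`, and
each new vertex `w` is adjacent to both endpoints `u, v` of the edge of `D_m` it subdivides.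
The molecules `δ_w - (δ_u + δ_v)/2` therefore span an isometric copy of `ℓ₁`: a `1`-Lipschitz
function pairs with each of them to at most `1` in absolute value, while the function equal to
`±1` on the new vertices and `0` on the old ones is `1`-Lipschitz and attains the `ℓ₁` norm.
Pairing an arbitrary molecule `μ` with the same kind of sign function shows that
`μ ↦ ∑_w μ(w) (δ_w - (δ_u + δ_v)/2)` is a norm-one projection onto that copy.
-/

open Function

section FreeNorm

variable {M : Type*} [MetricSpace M] [Fintype M]

lemma bddAbove_pairings {m : M → ℝ} (hm : m ∈ molecules M) :
    BddAbove {r : ℝ | ∃ f : M → ℝ, LipschitzWith 1 f ∧ r = ∑ p, m p * f p} := by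
  refine ⟨∑ p, |m p| * ∑ q : M, dist p q, ?_⟩
  rintro r ⟨f, hf, rfl⟩
  rcases isEmpty_or_nonempty M with hM | ⟨⟨q₀⟩⟩
  · simp
  -- `m` has total mass zero, so only the differences `f p - f q₀` matter
  have hshift : ∑ p, m p * f p = ∑ p, m p * (f p - f q₀) := by
    have hm' : ∑ p, m p = 0 := hm
    simp only [mul_sub, Finset.sum_sub_distrib, ← Finset.sum_mul, hm', zero_mul, sub_zero]
  rw [hshift]
  refine Finset.sum_le_sum fun p _ => ?_
  calc m p * (f p - f q₀) ≤ |m p| * |f p - f q₀| := (le_abs_self _).trans (abs_mul _ _).le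
    _ ≤ |m p| * dist p q₀ := by
      gcongr
      simpa [Real.dist_eq] using hf.dist_le_mul p q₀
    _ ≤ |m p| * ∑ q : M, dist p q := by
      gcongr
      exact Finset.single_le_sum (f := dist p) (fun q _ => dist_nonneg) (Finset.mem_univ q₀)

lemma le_freeNorm {m : M → ℝ} (hm : m ∈ molecules M) {f : M → ℝ} (hf : LipschitzWith 1 f) :
    m ⬝ᵥ f ≤ freeNorm M m :=
  le_csSup (bddAbove_pairings hm) ⟨f, hf, rfl⟩

lemma freeNorm_le {m : M → ℝ} {C : ℝ} (h : ∀ f : M → ℝ, LipschitzWith 1 f → m ⬝ᵥ f ≤ C) :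
    freeNorm M m ≤ C :=
  csSup_le ⟨0, 0, (LipschitzWith.const 0).weaken zero_le_one, by simp⟩
    (by rintro r ⟨f, hf, rfl⟩; exact h f hf)

end FreeNorm

section Peaks

variable {M W : Type*}

-- `ι w` is a peak with feet `a w`, `b w`; in `D_{m+1}` the peaks are the new vertices and the
-- feet are the endpoints of the edge of `D_m` that a new vertex subdivides
noncomputable def peakMolecule [DecidableEq M] (ι a b : W → M) (w : W) : M → ℝ :=
  Pi.single (ι w) 1 - (2⁻¹ : ℝ) • (Pi.single (a w) 1 + Pi.single (b w) 1)

noncomputable def peakEmbedding [DecidableEq M] [Fintype W] (ι a b : W → M) :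
    (W → ℝ) →ₗ[ℝ] (M → ℝ) :=
  Fintype.linearCombination ℝ (peakMolecule ι a b)

lemma peakEmbedding_dotProduct [Fintype M] [DecidableEq M] [Fintype W] (ι a b : W → M)
    (c : W → ℝ) (f : M → ℝ) :
    peakEmbedding ι a b c ⬝ᵥ f = ∑ w, c w * (f (ι w) - (f (a w) + f (b w)) / 2) := by
  simp only [peakEmbedding, Fintype.linearCombination_apply, sum_dotProduct, smul_dotProduct,
    peakMolecule, sub_dotProduct, add_dotProduct, single_dotProduct, smul_eq_mul]
  congr! 2
  ring

lemma peakEmbedding_mem_molecules [Fintype M] [DecidableEq M] [Fintype W] (ι a b : W → M)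
    (c : W → ℝ) : peakEmbedding ι a b c ∈ molecules M := by
  show ∑ p, peakEmbedding ι a b c p = 0
  rw [← dotProduct_one, peakEmbedding_dotProduct]
  simp

variable {ι a b : W → M}

lemma injective_of_two_le_dist [PseudoMetricSpace M]
    (hpeak : ∀ w w', w ≠ w' → 2 ≤ dist (ι w) (ι w')) :
    Injective ι := fun w w' h => by
  by_contra hne
  have := hpeak w w' hne
  rw [h, dist_self] at this
  norm_num at this

lemma peakEmbedding_apply [Fintype M] [DecidableEq M] [Fintype W] (hι : Injective ι)
    (ha : ∀ w, a w ∉ Set.range ι) (hb : ∀ w, b w ∉ Set.range ι) (c : W → ℝ) (w : W) :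
    peakEmbedding ι a b c (ι w) = c w := by
  have hsingle := peakEmbedding_dotProduct ι a b c (Pi.single (ι w) 1)
  rw [dotProduct_single, mul_one] at hsingle
  rw [hsingle]
  have hne : ∀ w', (Pi.single (ι w) 1 : M → ℝ) (a w') = 0 ∧
      (Pi.single (ι w) 1 : M → ℝ) (b w') = 0 :=
    fun w' => ⟨Pi.single_eq_of_ne (fun h => ha w' ⟨w, h.symm⟩) _,
      Pi.single_eq_of_ne (fun h => hb w' ⟨w, h.symm⟩) _⟩
  rw [Finset.sum_eq_single w (fun w' _ hw' => by simp [hne, hι.ne hw'])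
    (fun h => absurd (Finset.mem_univ w) h)]
  simp [hne]

lemma leftInverse_funLeft_peakEmbedding [Fintype M] [DecidableEq M] [Fintype W]
    (hι : Injective ι) (ha : ∀ w, a w ∉ Set.range ι) (hb : ∀ w, b w ∉ Set.range ι) :
    LeftInverse (LinearMap.funLeft ℝ ℝ ι) (peakEmbedding ι a b) := fun c =>
  funext (peakEmbedding_apply hι ha hb c)

lemma peakEmbedding_dotProduct_le [PseudoMetricSpace M] [Fintype M] [DecidableEq M] [Fintype W]
    (ha : ∀ w, dist (ι w) (a w) ≤ 1) (hb : ∀ w, dist (ι w) (b w) ≤ 1) (c : W → ℝ) {f : M → ℝ}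
    (hf : LipschitzWith 1 f) :
    peakEmbedding ι a b c ⬝ᵥ f ≤ ∑ w, |c w| := by
  have hf' : ∀ x y, |f x - f y| ≤ dist x y := fun x y => by
    simpa [Real.dist_eq] using hf.dist_le_mul x y
  rw [peakEmbedding_dotProduct]
  refine Finset.sum_le_sum fun w _ => ?_
  have hfa := abs_le.mp ((hf' _ _).trans (ha w))
  have hfb := abs_le.mp ((hf' _ _).trans (hb w))
  calc c w * (f (ι w) - (f (a w) + f (b w)) / 2)
      ≤ |c w| * |f (ι w) - (f (a w) + f (b w)) / 2| := (le_abs_self _).trans (abs_mul _ _).le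
    _ ≤ |c w| * 1 := by
      gcongr
      exact abs_le.mpr ⟨by linarith, by linarith⟩
    _ = |c w| := mul_one _

lemma lipschitzWith_extend_zero [PseudoMetricSpace M] (hsep : ∀ x y : M, x ≠ y → 1 ≤ dist x y)
    (hpeak : ∀ w w', w ≠ w' → 2 ≤ dist (ι w) (ι w')) {g : W → ℝ} (hg : ∀ w, |g w| ≤ 1) :
    LipschitzWith 1 (extend ι g 0) := by
  have hbound : ∀ x, |extend ι g 0 x| ≤ 1 := fun x => by
    classical
    rw [extend_def]
    split_ifs
    exacts [hg _, by simp]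
  refine LipschitzWith.of_dist_le_mul fun x y => ?_
  rw [NNReal.coe_one, one_mul, Real.dist_eq]
  rcases eq_or_ne x y with rfl | hxy
  · simp
  by_cases hpeaks : (∃ w, ι w = x) ∧ ∃ w', ι w' = y
  · obtain ⟨⟨w, rfl⟩, ⟨w', rfl⟩⟩ := hpeaks
    calc |extend ι g 0 (ι w) - extend ι g 0 (ι w')|
        ≤ |extend ι g 0 (ι w)| + |extend ι g 0 (ι w')| := abs_sub _ _
      _ ≤ 2 := by linarith [hbound (ι w), hbound (ι w')]
      _ ≤ dist (ι w) (ι w') := hpeak w w' (ne_of_apply_ne ι hxy)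
  · refine le_trans ?_ (hsep x y hxy)
    rcases not_and_or.mp hpeaks with hx | hy
    · simpa [extend_apply' _ _ _ hx] using hbound y
    · simpa [extend_apply' _ _ _ hy] using hbound x

lemma dotProduct_extend_sign [Fintype M] [Fintype W] (hι : Injective ι) (m : M → ℝ) :
    m ⬝ᵥ extend ι (fun w => (SignType.sign (m (ι w)) : ℝ)) 0 = ∑ w, |m (ι w)| := by
  refine (Fintype.sum_of_injective ι hι _ _ (fun p hp => ?_) fun w => ?_).symm
  · simp [extend_apply' _ _ _ hp]
  · rw [hι.extend_apply, self_mul_sign]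

lemma sum_abs_apply_le_freeNorm [MetricSpace M] [Fintype M] [Fintype W]
    (hsep : ∀ x y : M, x ≠ y → 1 ≤ dist x y)
    (hpeak : ∀ w w', w ≠ w' → 2 ≤ dist (ι w) (ι w')) {m : M → ℝ} (hm : m ∈ molecules M) :
    ∑ w, |m (ι w)| ≤ freeNorm M m := by
  rw [← dotProduct_extend_sign (injective_of_two_le_dist hpeak)]
  refine le_freeNorm hm (lipschitzWith_extend_zero hsep hpeak fun w => ?_)
  rcases lt_trichotomy (m (ι w)) 0 with h | h | h <;> simp [h]

theorem freeNorm_peakEmbedding [MetricSpace M] [Fintype M] [DecidableEq M] [Fintype W]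
    (hsep : ∀ x y : M, x ≠ y → 1 ≤ dist x y)
    (hpeak : ∀ w w', w ≠ w' → 2 ≤ dist (ι w) (ι w'))
    (ha : ∀ w, dist (ι w) (a w) ≤ 1) (hb : ∀ w, dist (ι w) (b w) ≤ 1)
    (ha' : ∀ w, a w ∉ Set.range ι) (hb' : ∀ w, b w ∉ Set.range ι) (c : W → ℝ) :
    freeNorm M (peakEmbedding ι a b c) = ∑ w, |c w| := by
  refine le_antisymm (freeNorm_le fun f hf => peakEmbedding_dotProduct_le ha hb c hf) ?_
  simpa only [peakEmbedding_apply (injective_of_two_le_dist hpeak) ha' hb'] using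
    sum_abs_apply_le_freeNorm hsep hpeak (peakEmbedding_mem_molecules ι a b c)

theorem exists_oneComplemented_l1 [MetricSpace M] [Fintype M] [DecidableEq M] [Fintype W]
    (hsep : ∀ x y : M, x ≠ y → 1 ≤ dist x y)
    (hpeak : ∀ w w', w ≠ w' → 2 ≤ dist (ι w) (ι w'))
    (ha : ∀ w, dist (ι w) (a w) ≤ 1) (hb : ∀ w, dist (ι w) (b w) ≤ 1)
    (ha' : ∀ w, a w ∉ Set.range ι) (hb' : ∀ w, b w ∉ Set.range ι) :
    ∃ Y : Submodule ℝ (M → ℝ), Y ≤ molecules M ∧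
      (∃ T : Y ≃ₗ[ℝ] (Fin (Fintype.card W) → ℝ), ∀ u : Y, freeNorm M u = l1norm (T u)) ∧
      (∃ P : (M → ℝ) →ₗ[ℝ] (M → ℝ),
        (∀ m ∈ molecules M, P m ∈ Y) ∧ (∀ u ∈ Y, P u = u) ∧
        ∀ m ∈ molecules M, freeNorm M (P m) ≤ freeNorm M m) := by
  have hι := injective_of_two_le_dist hpeak
  have hinv := leftInverse_funLeft_peakEmbedding hι ha' hb'
  have hnorm := freeNorm_peakEmbedding hsep hpeak ha hb ha' hb'
  let e := Fintype.equivFin W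
  refine ⟨LinearMap.range (peakEmbedding ι a b), ?_, ?_, ?_⟩
  · rintro _ ⟨c, rfl⟩
    exact peakEmbedding_mem_molecules ι a b c
  · refine ⟨(LinearEquiv.ofLeftInverse hinv).symm.trans (LinearEquiv.funCongrLeft ℝ ℝ e.symm),
      fun ⟨_, c, rfl⟩ => ?_⟩
    simp only [LinearEquiv.trans_apply, LinearEquiv.ofLeftInverse_symm_apply, hinv c, hnorm,
      l1norm, LinearEquiv.funCongrLeft_apply, LinearMap.funLeft_apply]
    exact (e.symm.sum_comp fun w => |c w|).symm
  · refine ⟨peakEmbedding ι a b ∘ₗ LinearMap.funLeft ℝ ℝ ι, fun m _ => ⟨_, rfl⟩, ?_, ?_⟩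
    · rintro _ ⟨c, rfl⟩
      simp only [LinearMap.comp_apply, hinv c]
    · intro m hm
      simpa only [LinearMap.comp_apply, hnorm, LinearMap.funLeft_apply] using
        sum_abs_apply_le_freeNorm hsep hpeak hm

end Peaks

section GraphMetric

variable {V : Type*} [MetricSpace V]

def IsGraphMetric (G : SimpleGraph V) : Prop := ∀ x y : V, dist x y = G.dist x y

namespace IsGraphMetric

variable {G : SimpleGraph V} {x y : V}

lemma dist_ne_zero (hG : IsGraphMetric G) (hxy : x ≠ y) : G.dist x y ≠ 0 := fun h =>
  hxy (dist_eq_zero.mp (by rw [hG, h, Nat.cast_zero]))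

lemma one_le_dist (hG : IsGraphMetric G) (hxy : x ≠ y) : 1 ≤ dist x y := by
  rw [hG]
  exact_mod_cast Nat.one_le_iff_ne_zero.mpr (hG.dist_ne_zero hxy)

lemma two_le_dist (hG : IsGraphMetric G) (hxy : x ≠ y) (hadj : ¬G.Adj x y) : 2 ≤ dist x y := by
  have h0 := hG.dist_ne_zero hxy
  have h1 : G.dist x y ≠ 1 := mt SimpleGraph.dist_eq_one_iff_adj.mp hadj
  rw [hG]
  exact_mod_cast (by omega : 2 ≤ G.dist x y)

lemma dist_eq_one (hG : IsGraphMetric G) (hadj : G.Adj x y) : dist x y = 1 := by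
  rw [hG, SimpleGraph.dist_eq_one_iff_adj.mpr hadj, Nat.cast_one]

end IsGraphMetric

end GraphMetric

lemma card_DE : ∀ m, Fintype.card (DE m) = 4 ^ m
  | 0 => rfl
  | m + 1 => by
    rw [show Fintype.card (DE (m + 1)) = Fintype.card (DE m × Fin 4) from rfl, Fintype.card_prod,
      card_DE m, Fintype.card_fin, pow_succ]

lemma DG_adj_inr_fst (m : ℕ) (w : DE m × Fin 2) :
    (DG (m + 1)).Adj (Sum.inr w) (Sum.inl (ends m w.1).1) := by
  obtain ⟨e, j⟩ := w
  refine ⟨Sum.inr_ne_inl, ?_⟩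
  fin_cases j
  exacts [⟨(e, 0), Or.inr rfl⟩, ⟨(e, 3), Or.inr rfl⟩]

lemma DG_adj_inr_snd (m : ℕ) (w : DE m × Fin 2) :
    (DG (m + 1)).Adj (Sum.inr w) (Sum.inl (ends m w.1).2) := by
  obtain ⟨e, j⟩ := w
  refine ⟨Sum.inr_ne_inl, ?_⟩
  fin_cases j
  exacts [⟨(e, 1), Or.inl rfl⟩, ⟨(e, 2), Or.inl rfl⟩]

-- every edge of `D_{m+1}` joins a new vertex to an old one
lemma DG_not_adj_inr_inr (m : ℕ) (w w' : DE m × Fin 2) :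
    ¬(DG (m + 1)).Adj (Sum.inr w) (Sum.inr w') := by
  rintro ⟨-, ⟨e, i⟩, h | h⟩ <;> fin_cases i <;> simp only [ends] at h <;> cases h

/-- `F(D_n)` contains a `1`-complemented subspace linearly isometric to
`ℓ₁^k` with `k = 2·4^{n-1}`. -/
theorem stmt7 (n : ℕ) (hn : 1 ≤ n) [MetricSpace (DV n)]
    (hdist : ∀ x y : DV n, dist x y = ((DG n).dist x y : ℝ)) :
    ∃ Y : Submodule ℝ (DV n → ℝ), Y ≤ molecules (DV n) ∧
      (∃ T : Y ≃ₗ[ℝ] (Fin (2 * 4 ^ (n - 1)) → ℝ),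
        ∀ u : Y, freeNorm (DV n) u = l1norm (T u)) ∧
      (∃ P : (DV n → ℝ) →ₗ[ℝ] (DV n → ℝ),
        (∀ m ∈ molecules (DV n), P m ∈ Y) ∧ (∀ u ∈ Y, P u = u) ∧
        ∀ m ∈ molecules (DV n), freeNorm (DV n) (P m) ≤ freeNorm (DV n) m) := by
  obtain ⟨m, rfl⟩ : ∃ m, n = m + 1 := ⟨n - 1, by omega⟩
  have hG : IsGraphMetric (DG (m + 1)) := hdist
  have hcard : Fintype.card (DE m × Fin 2) = 2 * 4 ^ (m + 1 - 1) := by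
    rw [Fintype.card_prod, card_DE, Fintype.card_fin, Nat.add_sub_cancel, mul_comm]
  rw [← hcard]
  exact exists_oneComplemented_l1 (M := DV (m + 1)) (ι := Sum.inr)
    (a := fun w => Sum.inl (ends m w.1).1) (b := fun w => Sum.inl (ends m w.1).2)
    (fun _ _ => hG.one_le_dist)
    (fun w w' hne => hG.two_le_dist (Sum.inr_injective.ne hne) (DG_not_adj_inr_inr m w w'))
    (fun w => (hG.dist_eq_one (DG_adj_inr_fst m w)).le)
    (fun w => (hG.dist_eq_one (DG_adj_inr_snd m w)).le)
    (fun _ ⟨_, h⟩ => Sum.inr_ne_inl h) (fun _ ⟨_, h⟩ => Sum.inr_ne_inl h)
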